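/- Let S be the three-element semigroup P = {e, a, 0} with relations e² = e, e·a = a, a·e = 0, a² = 0 (and 0 absorbing). If a nontrivial unary-semigroup identity x₁⋯xₙ = w holds in P (with P as an epigroup under pseudoinversion, where ē = e and ā = 0), then n > 1 and w = w′·xₙ for some word w′ whose set of letters is exactly {x₁,…,x_{n−1}}. -/

import Mathlib

/-- The three-element semigroup `P = ⟨a, e ∣ e² = e, ea = a, ae = 0⟩ = {e, a, 0}`. -/
inductive PSem : Type
  | e : PSem
  | a : PSem
  | z : PSem
deriving DecidableEq

instance : Fintype PSem := ⟨{PSem.e, PSem.a, PSem.z}, by intro x; cases x <;> decide⟩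

/-- Multiplication of `P`: `e·e = e`, `e·a = a`, and all other products are `0`. -/
def PSem.mul : PSem → PSem → PSem
  | .e, .e => .e
  | .e, .a => .a
  | _, _ => .z

instance : Mul PSem := ⟨PSem.mul⟩

instance : Semigroup PSem where
  mul_assoc := by decide

/-- The pseudoinversion of the (finite, hence epi-) semigroup `P`:
`ē = e`, `ā = 0`, `0̄ = 0`. -/
def PSem.pinv : PSem → PSem
  | .e => .e
  | _ => .z

/-- Unary words: terms in the signature of one binary and one unary operation,
with letters indexed by natural numbers. -/
inductive UWord : Type
  | letter : ℕ → UWord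
  | mul : UWord → UWord → UWord
  | pinv : UWord → UWord

/-- Value of a unary word in `P` under an assignment of letters. -/
def UWord.eval (φ : ℕ → PSem) : UWord → PSem
  | .letter i => φ i
  | .mul u v => u.eval φ * v.eval φ
  | .pinv u => PSem.pinv (u.eval φ)

/-- The set of letters occurring in a unary word. -/
def UWord.letters : UWord → Set ℕ
  | .letter i => {i}
  | .mul u v => u.letters ∪ v.letters
  | .pinv u => u.letters

/-- `chainW k` is the word `x₀ x₁ ⋯ x_k`. -/
def chainW : ℕ → UWord
  | 0 => .letter 0
  | k + 1 => .mul (chainW k) (.letter (k + 1))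

/-- Equality of unary words in the free unary semigroup, i.e. the congruence
generated by associativity of the binary operation. -/
inductive AEq : UWord → UWord → Prop
  | refl (u : UWord) : AEq u u
  | symm {u v : UWord} : AEq u v → AEq v u
  | trans {u v w : UWord} : AEq u v → AEq v w → AEq u w
  | assoc (u v w : UWord) : AEq ((u.mul v).mul w) (u.mul (v.mul w))
  | mul_congr {u u' v v' : UWord} : AEq u u' → AEq v v' → AEq (u.mul v) (u'.mul v')
  | pinv_congr {u u' : UWord} : AEq u u' → AEq u.pinv u'.pinv

/-!
Evaluate words under the assignment `markAt j`, which sends `x_j` to `a` and every other letter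
to `e`. A word then evaluates to `e` exactly when it avoids `x_j`, and to `a` only when it is
`w' · x_j` with `x_j` absent from `w'` (an `a` to the left of anything, or under the unary
operation, gives `0`). Since `x₁ ⋯ xₙ` takes the values `e`, `a`, `0` according as `j` is beyond,
at, or before the last letter, any identity `x₁ ⋯ xₙ = w` forces `w` to have the same letters and
to end in a single occurrence of `xₙ`; a bare `w = xₙ` has too few letters unless `n = 1`, where
the identity is trivial.
-/

namespace PSem

@[simp] lemma mul_eq_e_iff : ∀ {x y : PSem}, x * y = e ↔ x = e ∧ y = e := by decide

lemma mul_eq_a_iff : ∀ {x y : PSem}, x * y = a ↔ x = e ∧ y = a := by decide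

@[simp] lemma pinv_eq_e_iff : ∀ {x : PSem}, pinv x = e ↔ x = e := by decide

lemma pinv_ne_a : ∀ x : PSem, pinv x ≠ a := by decide

end PSem

def markAt (j i : ℕ) : PSem := if i = j then .a else .e

lemma AEq.eval_eq {u v : UWord} (h : AEq u v) (φ : ℕ → PSem) : u.eval φ = v.eval φ := by
  induction h with
  | refl => rfl
  | symm _ ih => exact ih.symm
  | trans _ _ ih₁ ih₂ => exact ih₁.trans ih₂
  | assoc => exact mul_assoc _ _ _
  | mul_congr _ _ ih₁ ih₂ => simp only [UWord.eval, ih₁, ih₂]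
  | pinv_congr _ ih => simp only [UWord.eval, ih]

namespace UWord

lemma letters_nonempty (u : UWord) : u.letters.Nonempty := by
  induction u with
  | letter i => exact Set.singleton_nonempty i
  | mul u v ihu _ => exact ihu.mono Set.subset_union_left
  | pinv u ih => exact ih

lemma eval_markAt_eq_e_iff (u : UWord) (j : ℕ) : u.eval (markAt j) = .e ↔ j ∉ u.letters := by
  induction u with
  | letter i =>
    obtain rfl | h := eq_or_ne i j
    · simp [eval, letters, markAt]
    · simp [eval, letters, markAt, h, h.symm]
  | mul u v ihu ihv => simp [eval, letters, ihu, ihv, not_or]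
  | pinv u ih => simp [eval, letters, ih]

lemma letters_eq_of_forall_eval_eq {u v : UWord} (h : ∀ φ, u.eval φ = v.eval φ) :
    u.letters = v.letters := by
  ext j
  have hu := eval_markAt_eq_e_iff u j
  rw [h, eval_markAt_eq_e_iff v j] at hu
  exact not_iff_not.mp hu.symm

lemma eq_letter_or_aEq_mul_letter_of_eval_markAt_eq_a {u : UWord} {j : ℕ}
    (h : u.eval (markAt j) = .a) :
    u = .letter j ∨ ∃ u' : UWord, AEq u (u'.mul (.letter j)) ∧ j ∉ u'.letters := by
  induction u with
  | letter i =>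
    left
    by_cases hij : i = j
    · rw [hij]
    · simp [eval, markAt, hij] at h
  | mul u v _ ihv =>
    obtain ⟨hu, hv⟩ := PSem.mul_eq_a_iff.mp h
    have hju := (eval_markAt_eq_e_iff u j).mp hu
    right
    rcases ihv hv with rfl | ⟨v', hv', hjv'⟩
    · exact ⟨u, AEq.refl _, hju⟩
    · refine ⟨u.mul v', (AEq.mul_congr (AEq.refl u) hv').trans (AEq.assoc _ _ _).symm, ?_⟩
      simp [letters, hju, hjv']
  | pinv u _ => exact absurd h (PSem.pinv_ne_a _)

end UWord

lemma letters_chainW (k : ℕ) : (chainW k).letters = Set.Iic k := by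
  induction k with
  | zero => ext i; simp [chainW, UWord.letters]
  | succ k ih =>
    ext i
    simp only [chainW, UWord.letters, ih, Set.mem_union, Set.mem_Iic, Set.mem_singleton_iff]
    omega

lemma chainW_eval_markAt_self (k : ℕ) : (chainW k).eval (markAt k) = .a := by
  cases k with
  | zero => simp [chainW, UWord.eval, markAt]
  | succ k =>
    have hk : (chainW k).eval (markAt (k + 1)) = .e :=
      (UWord.eval_markAt_eq_e_iff _ _).mpr (by simp [letters_chainW])
    simp only [chainW, UWord.eval, hk, markAt, if_pos]
    rfl

/-- Letters are 0-indexed: `xₖ` is the letter `k - 1`, and `x₁ ⋯ xₙ` is `chainW (n-1)`. -/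
theorem stmt15_general (n : ℕ) (w : UWord)
    (hholds : ∀ φ : ℕ → PSem, (chainW (n - 1)).eval φ = w.eval φ)
    (hnontrivial : ¬ AEq (chainW (n - 1)) w) :
    1 < n ∧ ∃ w' : UWord, AEq w (w'.mul (.letter (n - 1))) ∧
      w'.letters = {i : ℕ | i < n - 1} := by
  have hletters : w.letters = Set.Iic (n - 1) := by
    rw [← UWord.letters_eq_of_forall_eval_eq hholds, letters_chainW]
  have hlast : w.eval (markAt (n - 1)) = .a := by
    rw [← hholds]
    exact chainW_eval_markAt_self _
  rcases UWord.eq_letter_or_aEq_mul_letter_of_eval_markAt_eq_a hlast with rfl | ⟨w', hw, hw'⟩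
  · have h0 : 0 ∈ (UWord.letter (n - 1)).letters := by simp [hletters]
    have hn : n - 1 = 0 := (Set.mem_singleton_iff.mp h0).symm
    exact absurd (by rw [hn]; exact AEq.refl _) hnontrivial
  · have hletters' : w'.letters = Set.Iio (n - 1) := by
      have h : insert (n - 1) w'.letters = Set.Iic (n - 1) := by
        rw [← hletters, UWord.letters_eq_of_forall_eval_eq hw.eval_eq, UWord.letters,
          UWord.letters, Set.union_singleton]
      rw [← Set.insert_sdiff_self_of_notMem hw', h, Set.Iic_sdiff_right]
    obtain ⟨j, hj⟩ := w'.letters_nonempty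
    rw [hletters', Set.mem_Iio] at hj
    exact ⟨by omega, w', hw, hletters'⟩

/-- If a nontrivial identity `x₁ ⋯ xₙ = w` holds in the epigroup `P`, then
`n > 1` and (up to associativity) `w = w' · xₙ` where the set of letters of
`w'` is exactly `{x₁, …, x_{n-1}}`.  (Letters are 0-indexed: `xₖ` is the
letter `k - 1`, and `x₁ ⋯ xₙ` is `chainW (n-1)`.) -/
theorem stmt15 (n : ℕ) (hn : 1 ≤ n) (w : UWord)
    (hholds : ∀ φ : ℕ → PSem, (chainW (n - 1)).eval φ = w.eval φ)
    (hnontrivial : ¬ AEq (chainW (n - 1)) w) :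
    1 < n ∧ ∃ w' : UWord, AEq w (w'.mul (.letter (n - 1))) ∧
      w'.letters = {i : ℕ | i < n - 1} :=
  stmt15_general n w hholds hnontrivial
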